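/- arXiv:2512.02267 — 2 statements merged into one kernel-verified Lean document; each statement's English description precedes it below -/
import Mathlib

section
/- With N = 1 and n = 1, the quantity Z_1(x₁;q,t;a,b,c,d) = Σ_{μ⊆λ: λ₁≤1} [h_{1−λ₁}(ab;q) h_{λ'}(a,b;q) / ((q;q)_{1−λ₁} Π_{i≥1}(q;q)_{λ_i−λ_{i+1}})] · P_{λ/μ}(x₁;q,0) · t^{|μ|/2} h_{μ'}(c/√t,d/√t;q) equals (1+ab+ac+ad+bc+bd+cd+abcd + (a+b+c+d+abc+abd+acd+bcd)x₁) / ((1−q)(1−t)), interpreting the sum over partitions λ = (1^k) and μ ⊆ λ as a convergent geometric series in t. -/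
/-!
Every summand is `1/(1-q)` times a linear polynomial in `x`, and apart from the first two
summands the sequence satisfies `F (k + 2) = s² F k`. Splitting into even and odd indices
therefore turns the series into two geometric series of ratio `s² = t`, and the total is
`F 0 + F 1 + (F 2 + F 3) / (1 - s²)`, which simplifies to the stated expression.
-/

open Finset

noncomputable section

section TwoStepGeometric

variable {K : Type*} [NormedDivisionRing K]

lemma pow_mul_of_add_two_eq_mul {f : ℕ → K} {r : K} (hf : ∀ n, f (n + 2) = r * f n)
    (i k : ℕ) : f (2 * k + i) = r ^ k * f i := by
  induction k with
  | zero => simp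
  | succ k ih => rw [show 2 * (k + 1) + i = 2 * k + i + 2 by ring, hf, ih, pow_succ', mul_assoc]

lemma hasSum_of_add_two_eq_mul {f : ℕ → K} {r : K} (hr : ‖r‖ < 1)
    (hf : ∀ n, f (n + 2) = r * f n) : HasSum f ((1 - r)⁻¹ * (f 0 + f 1)) := by
  have hgeom (i : ℕ) : HasSum (fun k => f (2 * k + i)) ((1 - r)⁻¹ * f i) := by
    simpa only [pow_mul_of_add_two_eq_mul hf] using
      (hasSum_geometric_of_norm_lt_one hr).mul_right (f i)
  rw [mul_add]
  exact (hgeom 0).even_add_odd (hgeom 1)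

end TwoStepGeometric

/-- `boundaryFactor s c d j` is `t^{j/2} h_{(1^j)'}(c/√t, d/√t; q)` with `s = √t`. -/
def boundaryFactor (s c d : ℂ) (j : ℕ) : ℂ :=
  if j = 0 then 1
  else if j % 2 = 1 then s ^ (j - 1) * (c + d)
  else s ^ j * (1 + c * d / s ^ 2)

lemma boundaryFactor_add_two (s c d : ℂ) {j : ℕ} (hj : j ≠ 0) :
    boundaryFactor s c d (j + 2) = s ^ 2 * boundaryFactor s c d j := by
  have hpar : (j + 2) % 2 = j % 2 := by omega
  simp only [boundaryFactor, if_neg hj, if_neg (show j + 2 ≠ 0 by omega), hpar,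
    show j + 2 - 1 = j - 1 + 2 by omega]
  split_ifs <;> ring

/-- The summand of `Z_1` indexed by `λ = (1^k)`, summed over `μ ∈ {(1^k), (1^{k-1})}`. -/
def z1Term (q s a b c d x : ℂ) (k : ℕ) : ℂ :=
  ((if k % 2 = 1 then a + b else 1 + a * b) / (1 - q)) *
    (boundaryFactor s c d k + if k = 0 then 0 else boundaryFactor s c d (k - 1) * x)

lemma z1Term_add_four (q s a b c d x : ℂ) (n : ℕ) :
    z1Term q s a b c d x (n + 2 + 2) = s ^ 2 * z1Term q s a b c d x (n + 2) := by
  have hpar : (n + 2 + 2) % 2 = (n + 2) % 2 := by omega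
  have hB₀ := boundaryFactor_add_two s c d (j := n + 2) (by omega)
  have hB₁ := boundaryFactor_add_two s c d (j := n + 1) (by omega)
  simp only [z1Term, hpar, Nat.add_eq_zero_iff, OfNat.ofNat_ne_zero, and_false, if_false,
    show n + 2 + 2 - 1 = n + 1 + 2 by omega, show n + 2 - 1 = n + 1 by omega, hB₀, hB₁]
  ring

lemma hasSum_z1Term (q s a b c d x : ℂ) (hs : ‖s‖ < 1) :
    HasSum (z1Term q s a b c d x) (z1Term q s a b c d x 0 + z1Term q s a b c d x 1 +
      (1 - s ^ 2)⁻¹ * (z1Term q s a b c d x 2 + z1Term q s a b c d x 3)) := by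
  have hs2 : ‖s ^ 2‖ < 1 := by simpa using pow_lt_one₀ (norm_nonneg s) hs two_ne_zero
  have htail := hasSum_of_add_two_eq_mul (f := fun n => z1Term q s a b c d x (n + 2)) hs2
    (z1Term_add_four q s a b c d x)
  rw [← hasSum_nat_add_iff' 2]
  simpa [sum_range_succ, add_comm] using htail

theorem Z_one_explicit_general (q s a b c d x : ℂ) (hs0 : s ≠ 0) (hs : ‖s‖ < 1) :
    let B : ℕ → ℂ := fun j =>
      if j = 0 then 1
      else if j % 2 = 1 then s ^ (j - 1) * (c + d)
      else s ^ j * (1 + c * d / s ^ 2)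
    (∑' k : ℕ,
        ((if k % 2 = 1 then a + b else 1 + a * b) / (1 - q)) *
          (B k + if k = 0 then 0 else B (k - 1) * x))
      = (1 + a*b + a*c + a*d + b*c + b*d + c*d + a*b*c*d
          + (a + b + c + d + a*b*c + a*b*d + a*c*d + b*c*d) * x) / ((1 - q) * (1 - s ^ 2)) := by
  intro B
  have hs2 : ‖s ^ 2‖ < 1 := by simpa using pow_lt_one₀ (norm_nonneg s) hs two_ne_zero
  have hs2_ne : (1 : ℂ) - s ^ 2 ≠ 0 := (isUnit_one_sub_of_norm_lt_one hs2).ne_zero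
  change ∑' k, z1Term q s a b c d x k = _
  rw [(hasSum_z1Term q s a b c d x hs).tsum_eq]
  simp only [z1Term, boundaryFactor, Nat.zero_mod, zero_ne_one, ↓reduceIte, add_zero, mul_one,
    Nat.mod_succ, one_ne_zero, tsub_self, pow_zero, one_mul, Nat.mod_self, OfNat.ofNat_ne_zero,
    Nat.add_one_sub_one, Nat.reduceMod]
  field_simp
  ring

/-- the `N = 1`, `n = 1` evaluation of `Z_1(x₁;q,t;a,b,c,d)`.
The sum over pairs `μ ⊆ λ` with `λ₁ ≤ 1` (so `λ = (1^k)` and `μ ∈ {(1^k),(1^{k-1})}`)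
is parametrized by `k`; with `s = √t` the summand for given `k` is
`prefac(k) * (B k + B (k-1) * x₁)` where `prefac(k) = (a+b)/(1-q)` for `k` odd and
`(1+ab)/(1-q)` for `k` even (including the `h_{1-λ₁}(ab;q)/(q;q)_{1-λ₁}` factor at
`k = 0`), and `B j = t^{j/2} h_{(j)'... }(c/√t,d/√t;q)` is the boundary factor of `μ = (1^j)`.
The total equals the stated symmetric rational expression. -/
theorem Z_one_explicit (q s a b c d x : ℂ) (hq : q ≠ 1) (hs0 : s ≠ 0) (hs : ‖s‖ < 1) :
    let B : ℕ → ℂ := fun j =>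
      if j = 0 then 1
      else if j % 2 = 1 then s ^ (j - 1) * (c + d)
      else s ^ j * (1 + c * d / s ^ 2)
    (∑' k : ℕ,
        ((if k % 2 = 1 then a + b else 1 + a * b) / (1 - q)) *
          (B k + if k = 0 then 0 else B (k - 1) * x))
      = (1 + a*b + a*c + a*d + b*c + b*d + c*d + a*b*c*d
          + (a + b + c + d + a*b*c + a*b*d + a*c*d + b*c*d) * x) / ((1 - q) * (1 - s ^ 2)) :=
  Z_one_explicit_general q s a b c d x hs0 hs
end
end

section
/- (Residue at y_n = 1 of the symmetrized integrand) Let I_n(y;q,t) = (1−q)^{−n} Π_{i≠j} (y_i−y_j)/(y_i−q y_j) · Π_i y_i/((y_i²−1)(1−t y_i²)) · Π_{i<j} (y_i y_j − q)(1 − qt y_i y_j)/((y_i y_j − 1)(1 − t y_i y_j)) · Π_{i=1}^n Π_{j=1}^N (1 + y_i x_j). Then Res_{y_n = 1} I_n(y;q,t) = I_{n−1}(y₁,…,y_{n−1};q,t) · [1/(2(1−q)(1−t))] · Π_{1≤i<n} [(1−y_i)(1−qt y_i)/((1−q y_i)(1−t y_i))] · Π_{j=1}^N (1+x_j), as an identity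 of rational functions. -/
open Finset Filter
open scoped Topology

noncomputable section

/-- The symmetrized integrand
`I_n(y;q,t) = (1−q)^{−n} ∏_{i≠j} (y_i−y_j)/(y_i−qy_j) · ∏_i y_i/((y_i²−1)(1−ty_i²))
  · ∏_{i<j} (y_iy_j−q)(1−qty_iy_j)/((y_iy_j−1)(1−ty_iy_j)) · ∏_{i,j} (1+y_ix_j)`. -/
def Iden (q t : ℂ) {n N : ℕ} (x : Fin N → ℂ) (y : Fin n → ℂ) : ℂ :=
  ((1 - q) ^ n)⁻¹ *
    (∏ i, ∏ j, if i ≠ j then (y i - y j) / (y i - q * y j) else 1) *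
    (∏ i, y i / ((y i ^ 2 - 1) * (1 - t * y i ^ 2))) *
    (∏ i, ∏ j, if i < j then
        (y i * y j - q) * (1 - q * t * y i * y j) / ((y i * y j - 1) * (1 - t * y i * y j))
      else 1) *
    ∏ i, ∏ j, (1 + y i * x j)

/-!
Splitting off the last variable `w = y_n` writes `I_n(y, w)` as `I_{n-1}(y)` times factors in `w`.
The only one singular at `w = 1` is `w / ((w² - 1)(1 - t w²))`, whose residue there is
`1 / (2(1 - t))`. For each `i < n` the remaining factors coupling `y_i` with `w` are continuous at
`w = 1`, where the numerators `y_i - w` and `y_i w - q` cancel the denominators `y_i w - 1` and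
`y_i - q w`, leaving `(1 - y_i)(1 - q t y_i) / ((1 - q y_i)(1 - t y_i))`.
-/

def pairFactor (q t a w : ℂ) : ℂ :=
  (a - w) / (a - q * w) * ((w - a) / (w - q * a)) *
    ((a * w - q) * (1 - q * t * a * w) / ((a * w - 1) * (1 - t * a * w)))

theorem Iden_snoc (q t : ℂ) {m N : ℕ} (x : Fin N → ℂ) (y : Fin m → ℂ) (w : ℂ) :
    Iden q t x (Fin.snoc y w) = Iden q t x y *
      ((1 - q)⁻¹ * (w / ((w ^ 2 - 1) * (1 - t * w ^ 2))) * (∏ i, pairFactor q t (y i) w) *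
        ∏ j, (1 + w * x j)) := by
  simp only [Iden, pairFactor, Fin.prod_univ_castSucc, Fin.snoc_castSucc, Fin.snoc_last,
    ne_eq, Fin.castSucc_inj, (Fin.castSucc_lt_last _).ne, (Fin.castSucc_lt_last _).ne',
    Fin.castSucc_lt_castSucc_iff, Fin.castSucc_lt_last, (Fin.castSucc_lt_last _).not_gt,
    lt_self_iff_false, not_true_eq_false, not_false_eq_true, if_true, if_false, mul_one,
    prod_mul_distrib, prod_const_one]
  rw [pow_succ, mul_inv]
  ring

theorem tendsto_pairFactor (q t a : ℂ) (h1 : a ≠ 1) (h2 : a - q ≠ 0) (h3 : 1 - q * a ≠ 0)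
    (h4 : 1 - t * a ≠ 0) :
    Tendsto (pairFactor q t a) (𝓝 1)
      (𝓝 ((1 - a) * (1 - q * t * a) / ((1 - q * a) * (1 - t * a)))) := by
  have hcont : ContinuousAt (pairFactor q t a) 1 := by
    refine ((ContinuousAt.div (by fun_prop) (by fun_prop) ?_).mul
      (ContinuousAt.div (by fun_prop) (by fun_prop) ?_)).mul
      (ContinuousAt.div (by fun_prop) (by fun_prop) ?_)
    · simpa using h2
    · exact h3
    · simpa using mul_ne_zero (sub_ne_zero.mpr h1) h4
  convert hcont.tendsto using 2
  have h1' : a - 1 ≠ 0 := sub_ne_zero.mpr h1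
  simp only [pairFactor, mul_one]
  field_simp

theorem tendsto_sub_one_mul_div_sq_sub_one (t : ℂ) (ht : 1 - t ≠ 0) :
    Tendsto (fun w : ℂ => (w - 1) * (w / ((w ^ 2 - 1) * (1 - t * w ^ 2)))) (𝓝[≠] 1)
      (𝓝 (1 / (2 * (1 - t)))) := by
  have hcont : ContinuousAt (fun w : ℂ => w / ((w + 1) * (1 - t * w ^ 2))) 1 :=
    ContinuousAt.div (by fun_prop) (by fun_prop) (by norm_num [ht])
  have hval : 1 / ((1 + 1) * (1 - t * 1 ^ 2)) = 1 / (2 * (1 - t)) := by norm_num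
  refine (hval ▸ hcont.tendsto.mono_left nhdsWithin_le_nhds).congr' ?_
  filter_upwards [self_mem_nhdsWithin] with w hw
  have hw : w - 1 ≠ 0 := sub_ne_zero.mpr hw
  rw [show w ^ 2 - 1 = (w - 1) * (w + 1) by ring, mul_assoc, mul_div_assoc',
    mul_div_mul_left _ _ hw]

theorem residue_at_one_general (m N : ℕ) (q t : ℂ) (x : Fin N → ℂ) (y : Fin m → ℂ)
    (ht : (1 : ℂ) - t ≠ 0)
    (h1 : ∀ i, y i ≠ 1) (h2 : ∀ i, y i - q ≠ 0) (h3 : ∀ i, 1 - q * y i ≠ 0)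
    (h4 : ∀ i, 1 - t * y i ≠ 0) :
    Tendsto (fun w : ℂ => (w - 1) * Iden q t x (Fin.snoc y w)) (𝓝[≠] (1 : ℂ))
      (𝓝 (Iden q t x y * (1 / (2 * (1 - q) * (1 - t)))
        * (∏ i, (1 - y i) * (1 - q * t * y i) / ((1 - q * y i) * (1 - t * y i)))
        * ∏ j, (1 + x j))) := by
  have hpairs : Tendsto (fun w => ∏ i, pairFactor q t (y i) w) (𝓝[≠] 1)
      (𝓝 (∏ i, (1 - y i) * (1 - q * t * y i) / ((1 - q * y i) * (1 - t * y i)))) :=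
    (tendsto_finsetProd _ fun i _ ↦
      tendsto_pairFactor q t (y i) (h1 i) (h2 i) (h3 i) (h4 i)).mono_left nhdsWithin_le_nhds
  have hx : Tendsto (fun w : ℂ => ∏ j, (1 + w * x j)) (𝓝[≠] 1) (𝓝 (∏ j, (1 + x j))) := by
    have hcont : Continuous fun w : ℂ => ∏ j, (1 + w * x j) := by fun_prop
    simpa using (hcont.tendsto 1).mono_left nhdsWithin_le_nhds
  have hlim := ((tendsto_const_nhds (x := Iden q t x y * (1 - q)⁻¹)).mul
    (tendsto_sub_one_mul_div_sq_sub_one t ht)).mul hpairs |>.mul hx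
  convert hlim using 2 with w
  · rw [Iden_snoc]; ring
  · simp only [one_div, mul_inv]; ring

/-- residue at `y_n = 1` of the symmetrized integrand:
at generic values of the remaining variables,
`Res_{y_n=1} I_n(y;q,t)
  = I_{n−1}(y₁,…,y_{n−1};q,t) · 1/(2(1−q)(1−t))
      · ∏_{i<n} (1−y_i)(1−qty_i)/((1−qy_i)(1−ty_i)) · ∏_j (1+x_j)`,
where the residue of the simple pole is the limit of `(w−1)·I_n(y₁,…,y_{n−1},w)` as `w → 1`. -/
theorem residue_at_one (m N : ℕ) (q t : ℂ) (x : Fin N → ℂ) (y : Fin m → ℂ)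
    (hq : (1 : ℂ) - q ≠ 0) (ht : (1 : ℂ) - t ≠ 0)
    (h1 : ∀ i, y i ≠ 1) (h2 : ∀ i, y i - q ≠ 0) (h3 : ∀ i, 1 - q * y i ≠ 0)
    (h4 : ∀ i, 1 - t * y i ≠ 0)
    (h5 : ∀ i j, i ≠ j → y i - q * y j ≠ 0)
    (h6 : ∀ i, (y i) ^ 2 - 1 ≠ 0) (h7 : ∀ i, 1 - t * (y i) ^ 2 ≠ 0)
    (h8 : ∀ i j, i < j → y i * y j - 1 ≠ 0)
    (h9 : ∀ i j, i < j → 1 - t * (y i) * (y j) ≠ 0) :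
    Tendsto (fun w : ℂ => (w - 1) * Iden q t x (Fin.snoc y w)) (𝓝[≠] (1 : ℂ))
      (𝓝 (Iden q t x y * (1 / (2 * (1 - q) * (1 - t)))
        * (∏ i, (1 - y i) * (1 - q * t * y i) / ((1 - q * y i) * (1 - t * y i)))
        * ∏ j, (1 + x j))) :=
  residue_at_one_general m N q t x y ht h1 h2 h3 h4
end
end
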